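/- Proposition (same-class adjacency): for every realization of the ranks, if u and v are adjacent vertices of G that both belong to the candidate set C, then either both u and v belong to C⁻, or there is a single index i ∈ {1,…,k} such that both u and v belong to C_i⁺. -/
import Mathlib


open MeasureTheory Real
open scoped ENNReal

/-- `log* x`: the least `n` such that the `n`-fold iterated natural logarithm of `x` is `≤ 1`. -/
noncomputable def logStar (x : ℝ) : ℕ := sInf {n : ℕ | Real.log^[n] x ≤ 1}

/-- `τ = 1 / (log log log Δ)`. -/
noncomputable def tauOf (Δ : ℕ) : ℝ := 1 / Real.log (Real.log (Real.log Δ))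

/-- `ℓ = (log*(1/τ))^{1/100}`. -/
noncomputable def ellOf (Δ : ℕ) : ℝ := (logStar (1 / tauOf Δ) : ℝ) ^ ((1 : ℝ) / 100)

/-- `β = log*(1/τ) / ℓ`. -/
noncomputable def betaOf (Δ : ℕ) : ℝ := (logStar (1 / tauOf Δ) : ℝ) / ellOf Δ

/-- `k = ⌊log*(1/τ) / 100⌋`. -/
noncomputable def kOf (Δ : ℕ) : ℕ := logStar (1 / tauOf Δ) / 100

/-- Auxiliary sequence: `aw 0 = 10β`, `aw (n+1) = exp (ℓ · aw n) / (16ℓ)`. -/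
noncomputable def aw (Δ : ℕ) : ℕ → ℝ
  | 0 => 10 * betaOf Δ
  | n + 1 => Real.exp (ellOf Δ * aw Δ n) / (16 * ellOf Δ)

/-- Paper-indexed sequence `a_i`: `awP Δ 1 = 10β` and `awP Δ (i+1) = exp (ℓ·awP Δ i)/(16ℓ)`
for `i ≥ 1`. -/
noncomputable def awP (Δ i : ℕ) : ℝ := aw Δ (i - 1)

/-- `d_v = Σ_{u ∼ v} p_u`, the total desire in the neighborhood of `v`. -/
noncomputable def dW {V : Type*} [Fintype V] (G : SimpleGraph V) [DecidableRel G.Adj]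
    (p : V → ℝ) (v : V) : ℝ :=
  ∑ u ∈ G.neighborFinset v, p u

/-- `v ∈ C⁻`: `d_v ≤ √τ` and `r_v ≤ β·p_v`. -/
def CminusMem {V : Type*} [Fintype V] (G : SimpleGraph V) [DecidableRel G.Adj]
    (Δ : ℕ) (p r : V → ℝ) (v : V) : Prop :=
  dW G p v ≤ Real.sqrt (tauOf Δ) ∧ r v ≤ betaOf Δ * p v

/-- `v ∈ C_i⁺`: `√τ < d_v ≤ ℓ`, `r_v ∈ I_{v,i} = (a_i p_v, a_{i+1} p_v]`, and
`r_u ∈ J_{v,u,i} = (ℓ a_i p_u / d_v, 1]` for every neighbor `u` of `v`. -/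
def CplusMem {V : Type*} [Fintype V] (G : SimpleGraph V) [DecidableRel G.Adj]
    (Δ : ℕ) (p r : V → ℝ) (i : ℕ) (v : V) : Prop :=
  Real.sqrt (tauOf Δ) < dW G p v ∧ dW G p v ≤ ellOf Δ ∧
  r v ∈ Set.Ioc (awP Δ i * p v) (awP Δ (i + 1) * p v) ∧
  ∀ u, G.Adj v u → r u ∈ Set.Ioc (ellOf Δ * (awP Δ i * p u) / dW G p v) 1

/-- `v ∈ C = C⁻ ∪ C₁⁺ ∪ … ∪ C_k⁺`. -/
def CMem {V : Type*} [Fintype V] (G : SimpleGraph V) [DecidableRel G.Adj]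
    (Δ : ℕ) (p r : V → ℝ) (v : V) : Prop :=
  CminusMem G Δ p r v ∨ ∃ i ∈ Finset.Icc 1 (kOf Δ), CplusMem G Δ p r i v

/-- `v ∈ 𝓘`: `v` is a candidate and no neighbor of `v` is a candidate. -/
def ISMem {V : Type*} [Fintype V] (G : SimpleGraph V) [DecidableRel G.Adj]
    (Δ : ℕ) (p r : V → ℝ) (v : V) : Prop :=
  CMem G Δ p r v ∧ ∀ u, G.Adj v u → ¬ CMem G Δ p r u

/-- The ranks are independent and uniform on `[0,1]`: product Lebesgue measure on `[0,1]^V`. -/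
noncomputable def rankMeasure (V : Type*) [Fintype V] : Measure (V → ℝ) :=
  Measure.pi fun _ => (volume : Measure ℝ).restrict (Set.Icc 0 1)

/- ---------- auxiliary lemmas ---------- -/

lemma logStar_set_nonempty (x : ℝ) : ∃ n : ℕ, Real.log^[n] x ≤ 1 := by
  have key : ∀ n : ℕ, (∃ m : ℕ, Real.log^[m] x ≤ 1) ∨
      (1 < Real.log^[n] x ∧ Real.log^[n] x ≤ x - n) := by
    intro n
    induction n with
    | zero =>
      by_cases h : x ≤ 1
      · exact Or.inl ⟨0, h⟩
      · exact Or.inr ⟨lt_of_not_ge h, by simp⟩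
    | succ n ih =>
      rcases ih with h | ⟨h1, h2⟩
      · exact Or.inl h
      · have hy : Real.log^[n + 1] x = Real.log (Real.log^[n] x) :=
          Function.iterate_succ_apply' Real.log n x
        by_cases hle : Real.log^[n + 1] x ≤ 1
        · exact Or.inl ⟨n + 1, hle⟩
        · refine Or.inr ⟨lt_of_not_ge hle, ?_⟩
          have hlog : Real.log (Real.log^[n] x) ≤ Real.log^[n] x - 1 :=
            Real.log_le_sub_one_of_pos (by linarith)
          rw [hy]
          push_cast
          linarith
  rcases key ⌈x⌉₊ with h | ⟨h1, h2⟩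
  · exact h
  · exact absurd h2 (by have := Nat.le_ceil x; linarith)

lemma one_le_logStar (x : ℝ) (hx : 1 < x) : 1 ≤ logStar x := by
  rw [Nat.one_le_iff_ne_zero]
  intro h0
  have hne : {n : ℕ | Real.log^[n] x ≤ 1}.Nonempty := logStar_set_nonempty x
  have hmem := Nat.sInf_mem hne
  rw [show sInf {n : ℕ | Real.log^[n] x ≤ 1} = logStar x from rfl, h0] at hmem
  simp only [Set.mem_setOf_eq, Function.iterate_zero_apply] at hmem
  linarith

lemma one_le_m {Δ : ℕ} (hτ0 : 0 < tauOf Δ) (hτ1 : tauOf Δ ≤ 1 / 2) :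
    1 ≤ logStar (1 / tauOf Δ) := by
  apply one_le_logStar
  rw [lt_div_iff₀ hτ0]
  linarith

lemma one_le_ell {Δ : ℕ} (hτ0 : 0 < tauOf Δ) (hτ1 : tauOf Δ ≤ 1 / 2) :
    1 ≤ ellOf Δ := by
  have hm := one_le_m hτ0 hτ1
  have : (1 : ℝ) ≤ (logStar (1 / tauOf Δ) : ℝ) := by exact_mod_cast hm
  exact Real.one_le_rpow this (by norm_num)

lemma one_le_beta {Δ : ℕ} (hτ0 : 0 < tauOf Δ) (hτ1 : tauOf Δ ≤ 1 / 2) :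
    1 ≤ betaOf Δ := by
  have hm := one_le_m hτ0 hτ1
  have hm' : (1 : ℝ) ≤ (logStar (1 / tauOf Δ) : ℝ) := by exact_mod_cast hm
  have hℓ : 0 < ellOf Δ := lt_of_lt_of_le one_pos (one_le_ell hτ0 hτ1)
  rw [betaOf, le_div_iff₀ hℓ, one_mul, ellOf]
  calc ((logStar (1 / tauOf Δ) : ℝ)) ^ ((1 : ℝ) / 100)
      ≤ ((logStar (1 / tauOf Δ) : ℝ)) ^ ((1 : ℝ)) :=
        Real.rpow_le_rpow_of_exponent_le hm' (by norm_num)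
    _ = (logStar (1 / tauOf Δ) : ℝ) := Real.rpow_one _

lemma exp_ge_sixteen_mul {t : ℝ} (ht : 10 ≤ t) : 16 * t ≤ Real.exp t := by
  have h1 : (2 : ℝ) ≤ Real.exp 1 := by
    have := Real.add_one_le_exp (1 : ℝ); linarith
  have h10 : (1024 : ℝ) ≤ Real.exp 10 := by
    have he : Real.exp 1 ^ (10 : ℕ) = Real.exp 10 := by
      rw [← Real.exp_nat_mul]; norm_num
    have hp : (2 : ℝ) ^ (10 : ℕ) ≤ Real.exp 1 ^ (10 : ℕ) :=
      pow_le_pow_left₀ (by norm_num) h1 10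
    rw [he] at hp
    norm_num at hp
    linarith
  have h2 : Real.exp t = Real.exp 10 * Real.exp (t - 10) := by
    rw [← Real.exp_add]; ring_nf
  have h3 : t - 10 + 1 ≤ Real.exp (t - 10) := Real.add_one_le_exp _
  have h4 : Real.exp 10 * (t - 9) ≤ Real.exp t := by
    rw [h2]
    have := Real.exp_pos (10 : ℝ)
    nlinarith
  nlinarith

lemma aw_ten_le_and_mono {Δ : ℕ} (hτ0 : 0 < tauOf Δ) (hτ1 : tauOf Δ ≤ 1 / 2) :
    ∀ n : ℕ, 10 ≤ aw Δ n ∧ aw Δ n ≤ aw Δ (n + 1) := by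
  have hℓ : 1 ≤ ellOf Δ := one_le_ell hτ0 hτ1
  have hℓ0 : 0 < ellOf Δ := by linarith
  have hstep : ∀ a : ℝ, 10 ≤ a → a ≤ Real.exp (ellOf Δ * a) / (16 * ellOf Δ) := by
    intro a ha
    have ht : 10 ≤ ellOf Δ * a := by nlinarith
    have hexp : 16 * (ellOf Δ * a) ≤ Real.exp (ellOf Δ * a) := exp_ge_sixteen_mul ht
    rw [le_div_iff₀ (by positivity)]
    nlinarith
  intro n
  induction n with
  | zero =>
    have hβ : 1 ≤ betaOf Δ := one_le_beta hτ0 hτ1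
    have h10 : (10 : ℝ) ≤ aw Δ 0 := by simp only [aw]; linarith
    exact ⟨h10, hstep _ h10⟩
  | succ n ih =>
    have h10 : (10 : ℝ) ≤ aw Δ (n + 1) := le_trans ih.1 ih.2
    exact ⟨h10, hstep _ h10⟩

lemma aw_mono {Δ : ℕ} (hτ0 : 0 < tauOf Δ) (hτ1 : tauOf Δ ≤ 1 / 2) :
    Monotone (aw Δ) :=
  monotone_nat_of_le_succ fun n => (aw_ten_le_and_mono hτ0 hτ1 n).2

/-- If `v ∈ C_j⁺` and `u ∼ v`, then `r u > awP Δ j * p u`. -/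
lemma rank_gt_of_cplus_neighbor {V : Type*} [Fintype V] (G : SimpleGraph V)
    [DecidableRel G.Adj] {Δ : ℕ} (hτ0 : 0 < tauOf Δ) (hτ1 : tauOf Δ ≤ 1 / 2)
    {p r : V → ℝ} (hp : ∀ v, 0 ≤ p v ∧ p v ≤ tauOf Δ) {j : ℕ} {u v : V}
    (huv : G.Adj v u) (hv : CplusMem G Δ p r j v) :
    awP Δ j * p u < r u := by
  obtain ⟨hd1, hd2, _, hnb⟩ := hv
  have hd0 : 0 < dW G p v := lt_of_le_of_lt (Real.sqrt_nonneg _) hd1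
  have hru := (hnb u huv).1
  have haj : 0 ≤ awP Δ j := by
    have := (aw_ten_le_and_mono hτ0 hτ1 (j - 1)).1
    simp only [awP]; linarith
  have hpu := (hp u).1
  have hkey : awP Δ j * p u ≤ ellOf Δ * (awP Δ j * p u) / dW G p v := by
    rw [le_div_iff₀ hd0]
    nlinarith [mul_le_mul_of_nonneg_left hd2 (mul_nonneg haj hpu)]
  linarith

theorem stmt6 {V : Type*} [Fintype V] [DecidableEq V]
    (G : SimpleGraph V) [DecidableRel G.Adj] (Δ : ℕ)
    (hτ0 : 0 < tauOf Δ) (hτ1 : tauOf Δ ≤ 1 / 2)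
    (hdeg : ∀ v, G.degree v ≤ Δ) (htri : G.CliqueFree 3)
    (p : V → ℝ) (hp : ∀ v, 0 ≤ p v ∧ p v ≤ tauOf Δ)
    (r : V → ℝ) (u v : V) (huv : G.Adj u v)
    (hu : CMem G Δ p r u) (hv : CMem G Δ p r v) :
    (CminusMem G Δ p r u ∧ CminusMem G Δ p r v) ∨
      ∃ i ∈ Finset.Icc 1 (kOf Δ), CplusMem G Δ p r i u ∧ CplusMem G Δ p r i v := by
  have hβ : 1 ≤ betaOf Δ := one_le_beta hτ0 hτ1
  -- impossibility: C⁻ neighbor of C_j⁺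
  have Lminus : ∀ (a b : V) (j : ℕ), 1 ≤ j → G.Adj b a → CminusMem G Δ p r a →
      CplusMem G Δ p r j b → False := by
    intro a b j hj hab ha hb
    have hgt : awP Δ j * p a < r a := rank_gt_of_cplus_neighbor G hτ0 hτ1 hp hab hb
    have hmono : aw Δ 0 ≤ aw Δ (j - 1) := aw_mono hτ0 hτ1 (Nat.zero_le _)
    have h0 : aw Δ 0 = 10 * betaOf Δ := rfl
    have hpa := (hp a).1
    have hle : betaOf Δ * p a ≤ awP Δ j * p a := by
      have : betaOf Δ ≤ awP Δ j := by
        simp only [awP]; nlinarith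
      nlinarith
    have := ha.2
    linarith
  -- impossibility: C_i⁺ neighbor of C_j⁺ with i < j
  have Lplus : ∀ (a b : V) (i j : ℕ), i < j → G.Adj b a → CplusMem G Δ p r i a →
      CplusMem G Δ p r j b → False := by
    intro a b i j hij hab ha hb
    have hgt : awP Δ j * p a < r a := rank_gt_of_cplus_neighbor G hτ0 hτ1 hp hab hb
    have hle : r a ≤ awP Δ (i + 1) * p a := ha.2.2.1.2
    have hmono : aw Δ i ≤ aw Δ (j - 1) := aw_mono hτ0 hτ1 (by omega)
    have hle2 : awP Δ (i + 1) * p a ≤ awP Δ j * p a := by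
      have hpa := (hp a).1
      simp only [awP, Nat.add_sub_cancel]
      nlinarith
    linarith
  rcases hu with hu | ⟨i, hi, hui⟩
  · rcases hv with hv | ⟨j, hj, hvj⟩
    · exact Or.inl ⟨hu, hv⟩
    · exact absurd (Lminus u v j (Finset.mem_Icc.mp hj).1 huv.symm hu hvj) not_false
  · rcases hv with hv | ⟨j, hj, hvj⟩
    · exact absurd (Lminus v u i (Finset.mem_Icc.mp hi).1 huv hv hui) not_false
    · rcases lt_trichotomy i j with hij | hij | hij
      · exact absurd (Lplus u v i j hij huv.symm hui hvj) not_false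
      · exact Or.inr ⟨i, hi, hui, hij ▸ hvj⟩
      · exact absurd (Lplus v u j i hij huv hvj hui) not_false
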